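/- arXiv:2505.14908 — 4 statements merged into one kernel-verified Lean document; each statement's English description precedes it below -/
import Mathlib

section
/- Let T be a tree with bipartition {A,B}, |A| = l+1 ≤ |B|, total order m, and let δ be the minimum degree in T over vertices of A. Let H = H₁ ∨ H₂ be the join of a graph H₁ on l vertices with a graph H₂ on n−l vertices, where n ≥ m. If H₂ has maximum degree at least δ, then H contains a subgraph isomorphic to T. -/
open scoped Classical

/-- `G` contains a copy of `T` (a subgraph isomorphic to `T`). -/
def ContainsCopy {V W : Type*} (T : SimpleGraph V) (G : SimpleGraph W) : Prop :=
  ∃ f : V → W, Function.Injective f ∧ ∀ ⦃a b⦄, T.Adj a b → G.Adj (f a) (f b)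

/-- The join `G ∨ H` of two graphs: their disjoint union together with all edges
between the two vertex sets. -/
def graphJoin {α β : Type*} (G : SimpleGraph α) (H : SimpleGraph β) : SimpleGraph (α ⊕ β) where
  Adj x y :=
    match x, y with
    | Sum.inl a, Sum.inl b => G.Adj a b
    | Sum.inr a, Sum.inr b => H.Adj a b
    | Sum.inl _, Sum.inr _ => True
    | Sum.inr _, Sum.inl _ => True
  symm := ⟨by
    rintro (a|a) (b|b) h
    · exact G.adj_symm h
    · trivial
    · trivial
    · exact H.adj_symm h⟩
  loopless := ⟨by
    rintro (a|a) h
    · exact G.irrefl h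
    · exact H.irrefl h⟩


/-!
Put a vertex `v₀ ∈ A` of degree `δ` on a vertex `w` of `H₂` of degree at least `δ`, the other
`l` vertices of `A` onto `H₁`, and all of `B = Aᶜ` into `H₂`, the neighbours of `v₀` going to
neighbours of `w`. Every edge of `T` not at `v₀` joins `A \ {v₀}` to `B`, so it lands on an edge
of the join between `H₁` and `H₂`; the edges at `v₀` land on edges at `w`.
-/

open SimpleGraph Function

theorem containsCopy_iff_isContained {V W : Type*} {T : SimpleGraph V} {G : SimpleGraph W} :
    ContainsCopy T G ↔ T ⊑ G :=
  ⟨fun ⟨f, hf, hadj⟩ => ⟨⟨⟨f, fun h => hadj h⟩, hf⟩⟩,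
    fun ⟨c⟩ => ⟨c, c.injective, fun _ _ h => c.toHom.map_adj h⟩⟩

theorem isContained_graphJoin {V α β : Type*} {G : SimpleGraph V} {H₁ : SimpleGraph α}
    {H₂ : SimpleGraph β} (s : Set V) (h₁ : G.induce s ⊑ H₁) (h₂ : G.induce sᶜ ⊑ H₂) :
    G ⊑ graphJoin H₁ H₂ := by
  obtain ⟨c₁⟩ := h₁
  obtain ⟨c₂⟩ := h₂
  let f : V → α ⊕ β := fun v =>
    if hv : v ∈ s then .inl (c₁ ⟨v, hv⟩) else .inr (c₂ ⟨v, hv⟩)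
  have hinj : Injective f := by
    intro a b hab
    by_cases ha : a ∈ s <;> by_cases hb : b ∈ s <;>
      simp only [f, ha, hb, dite_true, dite_false, reduceCtorEq, Sum.inl.injEq, Sum.inr.injEq] at hab
    · exact congrArg Subtype.val (c₁.injective hab)
    · exact congrArg Subtype.val (c₂.injective hab)
  refine ⟨⟨⟨f, fun {a b} hab => ?_⟩, hinj⟩⟩
  by_cases ha : a ∈ s <;> by_cases hb : b ∈ s <;>
    simp only [f, ha, hb, dite_true, dite_false] <;> first
    | trivial
    | exact c₁.toHom.map_adj (show (G.induce s).Adj ⟨a, ha⟩ ⟨b, hb⟩ from hab)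
    | exact c₂.toHom.map_adj (show (G.induce sᶜ).Adj ⟨a, ha⟩ ⟨b, hb⟩ from hab)

theorem isContained_of_forall_adj_eq_or_eq {V W : Type*} [Fintype V] [Fintype W]
    {G : SimpleGraph V} {H : SimpleGraph W} {v : V} {w : W} [Fintype (G.neighborSet v)] [Fintype (H.neighborSet w)]
    (hstar : ∀ ⦃a b⦄, G.Adj a b → a = v ∨ b = v) (hdeg : G.degree v ≤ H.degree w)
    (hcard : Fintype.card V ≤ Fintype.card W) : G ⊑ H := by
  obtain ⟨E⟩ := Function.Embedding.nonempty_of_card_le hcard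
  obtain ⟨e⟩ : Nonempty (G.neighborSet v ↪ H.neighborSet w) :=
    Function.Embedding.nonempty_of_card_le (by simpa only [card_neighborSet_eq_degree] using hdeg)
  let f : Option (G.neighborSet v) ↪ V :=
    (Embedding.subtype _).optionElim v (by simp)
  let g : Option (G.neighborSet v) ↪ W :=
    (e.trans (Embedding.subtype _)).optionElim w (by simp [(e _).2.ne'])
  -- A permutation of `W` corrects the arbitrary embedding `E` on `v` and its neighbours.
  obtain ⟨σ, hσ⟩ := Equiv.Perm.exists_extending_pair (E ∘ f) g (E.injective.comp f.injective)
    g.injective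
  have hv : σ (E v) = w := hσ none
  have hN (x : G.neighborSet v) : H.Adj w (σ (E x)) := by
    rw [show σ (E x) = g (some x) from hσ (some x)]
    exact (e x).2
  refine ⟨⟨⟨σ ∘ E, fun {a b} hab => ?_⟩, σ.injective.comp E.injective⟩⟩
  rcases hstar hab with rfl | rfl
  · simpa only [comp_apply, hv] using hN ⟨b, hab⟩
  · simpa only [comp_apply, hv] using (hN ⟨a, hab.symm⟩).symm

theorem induce_eq_bot_of_isIndepSet {V : Type*} {G : SimpleGraph V} {s : Set V}
    (h : G.IsIndepSet s) : G.induce s = ⊥ := by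
  ext ⟨a, ha⟩ ⟨b, hb⟩
  simpa using fun hab => h ha hb (G.ne_of_adj hab) hab

theorem isContained_graphJoin_of_bipartition {V α β : Type*} [Fintype V] [Fintype α] [Fintype β]
    {G : SimpleGraph V} {H₁ : SimpleGraph α} {H₂ : SimpleGraph β} (A : Finset V)
    (hbip : ∀ ⦃u v⦄, G.Adj u v → (u ∈ A ↔ v ∉ A)) {v₀ : V} (hv₀ : v₀ ∈ A) {w : β}
    (hdeg : G.degree v₀ ≤ H₂.degree w) (hα : A.card ≤ Fintype.card α + 1)
    (hβ : Fintype.card V + 1 ≤ A.card + Fintype.card β) :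
    G ⊑ graphJoin H₁ H₂ := by
  set s : Set V := ↑(A.erase v₀)
  have hmem_compl {x : V} : x ∈ sᶜ ↔ x = v₀ ∨ x ∉ A := by
    simp only [s, Set.mem_compl_iff, Finset.mem_coe, Finset.mem_erase]
    tauto
  have hcard_s : Fintype.card s = A.card - 1 := by
    simp only [s, Finset.coe_sort_coe, Fintype.card_coe, Finset.card_erase_of_mem hv₀]
  refine isContained_graphJoin s ?_ ?_
  · have hindep : G.IsIndepSet s := fun a ha b hb _ hab =>
      (hbip hab).mp (Finset.mem_of_mem_erase ha) (Finset.mem_of_mem_erase hb)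
    rw [induce_eq_bot_of_isIndepSet hindep, bot_isContained_iff_card_le, hcard_s]
    omega
  · refine isContained_of_forall_adj_eq_or_eq (v := ⟨v₀, hmem_compl.mpr (.inl rfl)⟩) (w := w)
      ?_ ?_ ?_
    · rintro ⟨a, ha⟩ ⟨b, hb⟩ hab
      simp only [Subtype.mk.injEq]
      rcases hmem_compl.mp ha with rfl | ha <;> rcases hmem_compl.mp hb with rfl | hb <;> try tauto
      exact absurd ((hbip hab).mpr hb) ha
    · rwa [degree_induce_of_neighborSet_subset]
      exact fun x hx => hmem_compl.mpr (.inr ((hbip hx).mp hv₀))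
    · rw [Fintype.card_compl_set, hcard_s]
      omega

theorem tree_embeds_in_join_of_maxDegree_ge_general {V α β : Type*} [Fintype V] [Fintype α] [Fintype β]
    (T : SimpleGraph V) (m l n δ : ℕ) (hmV : Fintype.card V = m)
    (A : Finset V) (hbip : ∀ ⦃u v⦄, T.Adj u v → (u ∈ A ↔ v ∉ A))
    (hA : A.card = l + 1)
    (hδmem : ∃ v ∈ A, T.degree v = δ)
    (H₁ : SimpleGraph α) (H₂ : SimpleGraph β)
    (hα : Fintype.card α = l) (hβ : Fintype.card β = n - l) (hnm : m ≤ n)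
    (hmax : ∃ v : β, δ ≤ H₂.degree v) :
    ContainsCopy T (graphJoin H₁ H₂) := by
  obtain ⟨v₀, hv₀, rfl⟩ := hδmem
  obtain ⟨w, hw⟩ := hmax
  rw [containsCopy_iff_isContained]
  exact isContained_graphJoin_of_bipartition A hbip hv₀ hw (by omega) (by omega)

/-- Let `T` be a tree with bipartition `{A, B}`, `|A| = l+1 ≤ |B|`, total order `m`,
and let `δ` be the minimum degree in `T` over vertices of `A`.  Let `H = H₁ ∨ H₂` be
the join of a graph `H₁` on `l` vertices with a graph `H₂` on `n − l` vertices, where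
`n ≥ m`.  If `H₂` has maximum degree at least `δ`, then `H` contains a copy of `T`. -/
theorem tree_embeds_in_join_of_maxDegree_ge {V α β : Type*} [Fintype V] [Fintype α] [Fintype β]
    (T : SimpleGraph V) (hT : T.IsTree) (m l n δ : ℕ) (hmV : Fintype.card V = m)
    (A : Finset V) (hbip : ∀ ⦃u v⦄, T.Adj u v → (u ∈ A ↔ v ∉ A))
    (hA : A.card = l + 1) (hAB : A.card ≤ Aᶜ.card)
    (hδmin : ∀ v ∈ A, δ ≤ T.degree v) (hδmem : ∃ v ∈ A, T.degree v = δ)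
    (H₁ : SimpleGraph α) (H₂ : SimpleGraph β)
    (hα : Fintype.card α = l) (hβ : Fintype.card β = n - l) (hln : l ≤ n) (hnm : m ≤ n)
    (hmax : ∃ v : β, δ ≤ H₂.degree v) :
    ContainsCopy T (graphJoin H₁ H₂) :=
  tree_embeds_in_join_of_maxDegree_ge_general T m l n δ hmV A hbip hA hδmem H₁ H₂ hα hβ hnm hmax
end

section
/- Let d ≥ 1 and k ≥ 1. If H is a graph on N vertices with maximum degree at most d that contains no k vertex-disjoint copies of the star K_{1,d}, then H has at most (k−1)(d² + 1) vertices of degree exactly d. -/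
open scoped Classical

/-!
Take a maximal family `C` of degree-`d` vertices whose closed neighbourhoods are pairwise
disjoint. By maximality every vertex of degree `d` lies within distance 2 of some `c ∈ C`, and
at most `1 + d + d(d - 1) = d² + 1` vertices do so for a given `c`. The closed neighbourhoods of
the vertices of `C` are disjoint copies of `K_{1,d}`, so `#C < k`.
-/

open Finset

theorem Set.PairwiseDisjoint.exists_fin_pairwise_disjoint {ι α : Type*} [PartialOrder α]
    [OrderBot α] {C : Finset ι} {f : ι → α} (hC : (C : Set ι).PairwiseDisjoint f) {k : ℕ}
    (hk : k ≤ #C) :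
    ∃ c : Fin k → ι, (∀ i, c i ∈ C) ∧ Pairwise fun i j => Disjoint (f (c i)) (f (c j)) := by
  obtain ⟨e⟩ := Function.Embedding.nonempty_of_card_le (α := Fin k) (β := C) (by simpa using hk)
  refine ⟨fun i => e i, fun i => (e i).2, fun i j hij => hC (e i).2 (e j).2 ?_⟩
  exact fun h => hij (e.injective (Subtype.ext h))

namespace SimpleGraph

variable {V : Type*} [Fintype V] (G : SimpleGraph V)

noncomputable def closedNeighborFinset (v : V) : Finset V :=
  insert v (G.neighborFinset v)

/-- Removing `v` from the neighbourhood of each neighbour `u` is what makes the count below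
`d² + 1` rather than `(d + 1)²`. -/
noncomputable def twoBallFinset (v : V) : Finset V :=
  insert v ((G.neighborFinset v).biUnion fun u => insert u ((G.neighborFinset u).erase v))

theorem card_insert_erase_neighborFinset {u v : V} (h : G.Adj u v) :
    #(insert u ((G.neighborFinset u).erase v)) = G.degree u := by
  rw [card_insert_of_notMem (by simp), ← card_neighborFinset_eq_degree]
  exact card_erase_add_one (by simpa using h)

theorem card_twoBallFinset_le {d : ℕ} (hmax : ∀ v, G.degree v ≤ d) (v : V) :
    #(G.twoBallFinset v) ≤ d ^ 2 + 1 := by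
  have hnbr : ∀ u ∈ G.neighborFinset v, #(insert u ((G.neighborFinset u).erase v)) ≤ d :=
    fun u hu =>
      (G.card_insert_erase_neighborFinset ((mem_neighborFinset _ _ _).1 hu).symm).trans_le (hmax u)
  calc #(G.twoBallFinset v)
      ≤ #((G.neighborFinset v).biUnion fun u => insert u ((G.neighborFinset u).erase v)) + 1 :=
        card_insert_le _ _
    _ ≤ #(G.neighborFinset v) * d + 1 := by gcongr; exact card_biUnion_le_card_mul _ _ _ hnbr
    _ ≤ d * d + 1 := by gcongr; simpa using hmax v
    _ = d ^ 2 + 1 := by ring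

theorem disjoint_closedNeighborFinset_of_notMem_twoBallFinset {c v : V}
    (h : c ∉ G.twoBallFinset v) :
    Disjoint (G.closedNeighborFinset c) (G.closedNeighborFinset v) := by
  rw [Finset.disjoint_left]
  intro x hxc hxv
  apply h
  simp only [closedNeighborFinset, mem_insert, mem_neighborFinset] at hxc hxv
  simp only [twoBallFinset, mem_insert, mem_biUnion, mem_erase, mem_neighborFinset]
  by_cases hcv : c = v
  · exact .inl hcv
  refine .inr ?_
  rcases hxc with rfl | hcx <;> rcases hxv with rfl | hvx
  · exact absurd rfl hcv
  · exact ⟨x, hvx, .inl rfl⟩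
  · exact ⟨c, hcx.symm, .inl rfl⟩
  · exact ⟨x, hvx, .inr ⟨hcv, hcx.symm⟩⟩

theorem exists_pairwiseDisjoint_closedNeighborFinset {d : ℕ} (hmax : ∀ v, G.degree v ≤ d)
    (A : Finset V) :
    ∃ C ⊆ A, (C : Set V).PairwiseDisjoint G.closedNeighborFinset ∧ #A ≤ #C * (d ^ 2 + 1) := by
  set 𝒞 := A.powerset.filter fun C : Finset V =>
    (C : Set V).PairwiseDisjoint G.closedNeighborFinset
  obtain ⟨C, hC𝒞, hCmax⟩ := 𝒞.exists_max_image card ⟨∅, by simp [𝒞]⟩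
  obtain ⟨hCA, hC⟩ : C ⊆ A ∧ (C : Set V).PairwiseDisjoint G.closedNeighborFinset := by
    simpa [𝒞] using hC𝒞
  have hcover : A ⊆ C.biUnion G.twoBallFinset := by
    intro a ha
    by_contra hout
    simp only [mem_biUnion, not_exists, not_and] at hout
    have haC : a ∉ C := fun haC => hout a haC (mem_insert_self _ _)
    have hins : insert a C ∈ 𝒞 := by
      simp only [𝒞, mem_filter, mem_powerset, coe_insert]
      refine ⟨insert_subset ha hCA, hC.insert fun c hc _ =>
        G.disjoint_closedNeighborFinset_of_notMem_twoBallFinset (hout c hc)⟩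
    have := hCmax _ hins
    rw [card_insert_of_notMem haC] at this
    omega
  refine ⟨C, hCA, hC, ?_⟩
  calc #A ≤ #(C.biUnion G.twoBallFinset) := card_le_card hcover
    _ ≤ #C * (d ^ 2 + 1) :=
      card_biUnion_le_card_mul _ _ _ fun c _ => G.card_twoBallFinset_le hmax c

end SimpleGraph

theorem star_free_degree_count_general {V : Type*} [Fintype V] (H : SimpleGraph V)
    (d k : ℕ)
    (hmax : ∀ v, H.degree v ≤ d)
    (hfree : ¬ ∃ (c : Fin k → V) (S : Fin k → Finset V),
        (∀ i, S i ⊆ H.neighborFinset (c i) ∧ (S i).card = d) ∧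
        (∀ i j, i ≠ j → Disjoint (insert (c i) (S i)) (insert (c j) (S j)))) :
    (Finset.univ.filter (fun v => H.degree v = d)).card ≤ (k - 1) * (d ^ 2 + 1) := by
  obtain ⟨C, hCA, hC, hcard⟩ :=
    H.exists_pairwiseDisjoint_closedNeighborFinset hmax (univ.filter fun v => H.degree v = d)
  have hCk : #C < k := by
    by_contra! hkC
    obtain ⟨c, hcC, hc⟩ := hC.exists_fin_pairwise_disjoint hkC
    refine hfree ⟨c, fun i => H.neighborFinset (c i), fun i => ⟨subset_rfl, ?_⟩,
      fun i j hij => hc hij⟩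
    simpa using hCA (hcC i)
  calc _ ≤ #C * (d ^ 2 + 1) := hcard
    _ ≤ (k - 1) * (d ^ 2 + 1) := Nat.mul_le_mul_right _ (by omega)

/-- If `H` is a graph on `N` vertices with maximum degree at most `d ≥ 1` that does not
contain `k ≥ 1` pairwise vertex-disjoint copies of the star `K_{1,d}` (a copy being
given by a center together with `d` of its neighbors), then `H` has at most
`(k−1)(d² + 1)` vertices of degree exactly `d`. -/
theorem star_free_degree_count {V : Type*} [Fintype V] (H : SimpleGraph V)
    (N d k : ℕ) (hd : 1 ≤ d) (hk : 1 ≤ k) (hN : Fintype.card V = N)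
    (hmax : ∀ v, H.degree v ≤ d)
    (hfree : ¬ ∃ (c : Fin k → V) (S : Fin k → Finset V),
        (∀ i, S i ⊆ H.neighborFinset (c i) ∧ (S i).card = d) ∧
        (∀ i j, i ≠ j → Disjoint (insert (c i) (S i)) (insert (c j) (S j)))) :
    (Finset.univ.filter (fun v => H.degree v = d)).card ≤ (k - 1) * (d ^ 2 + 1) :=
  star_free_degree_count_general H d k hmax hfree
end

section
/- For integers l ≥ 1 and δ ≥ 1, there exists a tree T on m vertices whose smaller partite set A has exactly l+1 vertices and with min{deg_T(v) : v ∈ A} = δ if and only if m ≥ max{2l+2, (l+1)δ + 1}. -/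
/-!
Since `A` is one side of the bipartition, the edges at distinct vertices of `A` are distinct,
so `(l + 1) δ ≤ ∑_{v ∈ A} deg v = m - 1`; and `|A| ≤ |B|` gives `m ≥ 2l + 2`.

Conversely, join a root to `l + 1` vertices `a₀, …, a_l` and hang `δ - 1` leaves below each
`a_i` with `i ≥ 1` and the remaining `m - (l + 2) - l (δ - 1) ≥ δ - 1` leaves below `a₀`.
Trees of this kind are built from a parent function decreasing a height: the graph is then
connected and has one edge per non-root vertex.
-/

open scoped Classical

open Finset SimpleGraph

section ParentGraph

variable {V : Type*} (p : V → V) (r : V)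

def parentGraph : SimpleGraph V := SimpleGraph.fromRel fun u v => u ≠ r ∧ v = p u

variable {p r} {rank : V → ℕ}

lemma parentGraph_adj (hp : ∀ v ≠ r, rank (p v) < rank v) {u v : V} :
    (parentGraph p r).Adj u v ↔ (u ≠ r ∧ v = p u) ∨ (v ≠ r ∧ u = p v) := by
  refine ⟨And.right, fun h => ⟨?_, h⟩⟩
  rintro rfl
  rcases h with ⟨hu, h⟩ | ⟨hu, h⟩ <;> exact (hp u hu).ne (congrArg rank h).symm

lemma parentGraph_reachable_root (hp : ∀ v ≠ r, rank (p v) < rank v) (v : V) :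
    (parentGraph p r).Reachable v r := by
  induction h : rank v using Nat.strong_induction_on generalizing v with
  | _ n ih =>
    by_cases hv : v = r
    · exact hv ▸ .rfl
    · have hadj : (parentGraph p r).Adj v (p v) := (parentGraph_adj hp).2 (.inl ⟨hv, rfl⟩)
      exact hadj.reachable.trans (ih _ (h ▸ hp v hv) _ rfl)

lemma card_edgeSet_parentGraph (hp : ∀ v ≠ r, rank (p v) < rank v) :
    Nat.card (parentGraph p r).edgeSet = Nat.card {v // v ≠ r} := by
  symm
  refine Nat.card_eq_of_bijective
    (fun v => ⟨s(v.1, p v.1), (parentGraph_adj hp).2 (.inl ⟨v.2, rfl⟩)⟩) ⟨?_, ?_⟩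
  · rintro ⟨u, hu⟩ ⟨v, hv⟩ h
    rcases Sym2.eq_iff.1 (congrArg Subtype.val h) with ⟨rfl, -⟩ | ⟨rfl, hvu⟩
    · rfl
    · exact (lt_asymm (hp v hv) (by simpa [hvu] using hp _ hu)).elim
  · rintro ⟨e, he⟩
    induction e using Sym2.ind with
    | _ a b =>
      rw [mem_edgeSet, parentGraph_adj hp] at he
      rcases he with ⟨ha, rfl⟩ | ⟨hb, rfl⟩
      · exact ⟨⟨a, ha⟩, rfl⟩
      · exact ⟨⟨b, hb⟩, Subtype.ext Sym2.eq_swap⟩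

lemma parentGraph_isTree [Finite V] (hp : ∀ v ≠ r, rank (p v) < rank v) :
    (parentGraph p r).IsTree := by
  have : Nonempty V := ⟨r⟩
  refine isTree_iff_connected_and_card.2
    ⟨.mk fun u v => (parentGraph_reachable_root hp u).trans (parentGraph_reachable_root hp v).symm,
      ?_⟩
  rw [card_edgeSet_parentGraph hp, ← Finite.card_option,
    Nat.card_congr (Equiv.optionSubtypeNe r)]

lemma degree_parentGraph [Fintype V] [DecidableEq V] [DecidableRel (parentGraph p r).Adj]
    (hp : ∀ v ≠ r, rank (p v) < rank v) {v : V} (hv : v ≠ r) :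
    (parentGraph p r).degree v = #{u | u ≠ r ∧ p u = v} + 1 := by
  have hparent : p v ∉ ({u | u ≠ r ∧ p u = v} : Finset V) := by
    simp only [mem_filter, mem_univ, true_and, not_and]
    intro hpv hppv
    exact lt_asymm (hp v hv) (by simpa [hppv] using hp _ hpv)
  rw [← card_neighborFinset_eq_degree, ← card_insert_of_notMem hparent]
  congr 1
  ext u
  simp only [mem_neighborFinset, parentGraph_adj hp, mem_insert, mem_filter, mem_univ, true_and]
  grind

end ParentGraph

section TreeFamily

variable {V W : Type*} [Fintype V] [DecidableEq V] [Fintype W] [DecidableEq W]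

/-- `T ∈ 𝒯_{m,l+1}^δ` with `A` the part of size `l + 1`, where `m = Fintype.card V`. -/
def IsTreeFamilyMember (T : SimpleGraph V) [DecidableRel T.Adj] (A : Finset V) (l δ : ℕ) :
    Prop :=
  T.IsTree ∧ (∀ ⦃u v⦄, T.Adj u v → (u ∈ A ↔ v ∉ A)) ∧ #A = l + 1 ∧ #A ≤ #Aᶜ ∧
    (∀ v ∈ A, δ ≤ T.degree v) ∧ ∃ v ∈ A, T.degree v = δ

lemma isBipartiteWith_compl_of_adj {T : SimpleGraph V} {A : Finset V}
    (hA : ∀ ⦃u v⦄, T.Adj u v → (u ∈ A ↔ v ∉ A)) : T.IsBipartiteWith A ↑Aᶜ where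
  disjoint := by simpa using disjoint_compl_right
  mem_of_adj u v huv := by
    have := hA huv
    by_cases hu : u ∈ A <;> simp_all

variable {T : SimpleGraph V} [DecidableRel T.Adj] {A : Finset V} {l δ : ℕ}

lemma IsTreeFamilyMember.le_card (h : IsTreeFamilyMember T A l δ) :
    max (2 * l + 2) ((l + 1) * δ + 1) ≤ Fintype.card V := by
  obtain ⟨hT, hA, hcard, hle, hdeg, -⟩ := h
  have hsplit : #A + #Aᶜ = Fintype.card V := card_add_card_compl A
  have hedges : (l + 1) * δ ≤ #T.edgeFinset := calc
    (l + 1) * δ = ∑ _v ∈ A, δ := by rw [sum_const, hcard, smul_eq_mul]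
    _ ≤ ∑ v ∈ A, T.degree v := sum_le_sum hdeg
    _ = #T.edgeFinset :=
      isBipartiteWith_sum_degrees_eq_card_edges (isBipartiteWith_compl_of_adj hA)
  have := hT.card_edgeFinset
  omega

lemma IsTreeFamilyMember.comap (h : IsTreeFamilyMember T A l δ) (e : V ≃ W) :
    IsTreeFamilyMember (T.comap e.symm) (A.map e.toEmbedding) l δ := by
  obtain ⟨hT, hA, hcard, hle, hdeg, v, hv, hvdeg⟩ := h
  have hdeg' (w : W) : (T.comap e.symm).degree w = T.degree (e.symm w) :=
    ((Iso.comap e.symm T).degree_eq w).symm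
  refine ⟨(Iso.comap e.symm T).isTree_iff.2 hT, fun u v huv => by simpa using hA huv, by simpa,
    by simpa [card_compl, Fintype.card_congr e] using hle, fun w hw => ?_, e v, by simpa, ?_⟩
  · rw [hdeg']
    exact hdeg _ (mem_map_equiv.1 hw)
  · rwa [hdeg', e.symm_apply_apply]

end TreeFamily

section DepthTwoTree

variable {α : Type*} (c : α → ℕ)

/-- The root `none`, the middle vertices `some (.inl a)`, and below each `a` the `c a` leaves
`some (.inr ⟨a, i⟩)`. -/
abbrev DepthTwoVertex := Option (α ⊕ Σ a, Fin (c a))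

namespace DepthTwoVertex

def parent : DepthTwoVertex c → DepthTwoVertex c
  | some (.inr x) => some (.inl x.1)
  | _ => none

def height : DepthTwoVertex c → ℕ
  | none => 0
  | some (.inl _) => 1
  | some (.inr _) => 2

variable {c}

lemma height_parent_lt : ∀ v ≠ none, height c (parent c v) < height c v
  | some (.inl _), _ | some (.inr _), _ => by simp [height, parent]

variable (c) in
def middle [Fintype α] : Finset (DepthTwoVertex c) :=
  univ.map (Function.Embedding.inl.trans Function.Embedding.some)

end DepthTwoVertex

open DepthTwoVertex

abbrev depthTwoTree : SimpleGraph (DepthTwoVertex c) := parentGraph (parent c) none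

variable {c}

lemma depthTwoTree_isTree [Finite α] : (depthTwoTree c).IsTree :=
  parentGraph_isTree height_parent_lt

lemma mem_middle_iff_of_adj [Fintype α] {u v : DepthTwoVertex c}
    (h : (depthTwoTree c).Adj u v) : u ∈ middle c ↔ v ∉ middle c := by
  rw [depthTwoTree, parentGraph_adj height_parent_lt] at h
  rcases h with ⟨hu, rfl⟩ | ⟨hv, rfl⟩
  · rcases u with _ | _ | _ <;> simp_all [middle, parent]
  · rcases v with _ | _ | _ <;> simp_all [middle, parent]

lemma degree_depthTwoTree_inl [Fintype α] [DecidableEq α] [DecidableRel (depthTwoTree c).Adj]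
    (a : α) : (depthTwoTree c).degree (some (.inl a)) = c a + 1 := by
  rw [degree_parentGraph height_parent_lt (Option.some_ne_none _), card_filter,
    Fintype.sum_option, Fintype.sum_sum_type, Fintype.sum_sigma]
  simp [parent]

lemma card_depthTwoVertex [Fintype α] :
    Fintype.card (DepthTwoVertex c) = Fintype.card α + ∑ a, c a + 1 := by
  simp [Fintype.card_sigma]

lemma depthTwoTree_isTreeFamilyMember [Fintype α] [DecidableEq α]
    [DecidableRel (depthTwoTree c).Adj] {l δ : ℕ} (hα : Fintype.card α = l + 1)
    (hc : ∀ a, δ ≤ c a + 1) (a₀ : α) (hc₀ : c a₀ + 1 = δ) (hleaves : l ≤ ∑ a, c a) :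
    IsTreeFamilyMember (depthTwoTree c) (middle c) l δ := by
  have hmiddle : #(middle c) = l + 1 := by simp [middle, hα]
  refine ⟨depthTwoTree_isTree, fun u v => mem_middle_iff_of_adj, hmiddle, ?_, ?_, ?_⟩
  · rw [card_compl, card_depthTwoVertex, hmiddle, hα]
    omega
  · simp [middle, degree_depthTwoTree_inl, hc]
  · exact ⟨some (.inl a₀), by simp [middle], by rw [degree_depthTwoTree_inl, hc₀]⟩

end DepthTwoTree

lemma exists_isTreeFamilyMember_fin {l δ m : ℕ} (hl : 1 ≤ l) (hδ : 1 ≤ δ)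
    (hm : max (2 * l + 2) ((l + 1) * δ + 1) ≤ m) :
    ∃ (T : SimpleGraph (Fin m)) (A : Finset (Fin m)), IsTreeFamilyMember T A l δ := by
  obtain ⟨d, rfl⟩ : ∃ d, δ = d + 1 := ⟨δ - 1, by omega⟩
  have hm' : l * d + l + d + 2 ≤ m ∧ 2 * l + 2 ≤ m := by
    have : (l + 1) * (d + 1) = l * d + l + d + 1 := by ring
    omega
  let c : Fin (l + 1) → ℕ := Fin.cons (m - (l + 2) - l * d) fun _ => d
  have hsum : ∑ a, c a = m - (l + 2) := by
    simp only [c, Fin.sum_cons, sum_const, card_univ, Fintype.card_fin, smul_eq_mul]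
    omega
  have hT := depthTwoTree_isTreeFamilyMember (c := c) (δ := d + 1) (Fintype.card_fin _)
    (Fin.cases (by simp only [c, Fin.cons_zero]; omega) fun _ => by simp [c])
    (Fin.succ ⟨0, hl⟩) (by simp only [c, Fin.cons_succ]) (by omega)
  have hcard : Fintype.card (DepthTwoVertex c) = m := by
    rw [card_depthTwoVertex, hsum, Fintype.card_fin]
    omega
  exact ⟨_, _, by convert hT.comap (Fintype.equivFinOfCardEq hcard)⟩

/-- For integers `l ≥ 1` and `δ ≥ 1`, there exists a tree `T` on `m` vertices whose
smaller partite set `A` has exactly `l+1` vertices and whose minimum degree over `A`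
equals `δ`, if and only if `m ≥ max {2l+2, (l+1)δ + 1}`. -/
theorem tree_family_nonempty_iff (l δ m : ℕ) (hl : 1 ≤ l) (hδ : 1 ≤ δ) :
    (∃ (T : SimpleGraph (Fin m)) (A : Finset (Fin m)),
        T.IsTree ∧
        (∀ ⦃u v⦄, T.Adj u v → (u ∈ A ↔ v ∉ A)) ∧
        A.card = l + 1 ∧ A.card ≤ Aᶜ.card ∧
        (∀ v ∈ A, δ ≤ T.degree v) ∧ (∃ v ∈ A, T.degree v = δ)) ↔
      max (2 * l + 2) ((l + 1) * δ + 1) ≤ m := by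
  refine ⟨fun ⟨T, A, h⟩ => ?_, exists_isTreeFamilyMember_fin hl hδ⟩
  simpa using IsTreeFamilyMember.le_card (T := T) (A := A) h
end

section
/- Let H = H₁ ∨ H₂ where H₁ has l vertices and H₂ has n−l vertices with maximum degree d, λ(H) > 0, and let y be a Perron eigenvector of H. Set M = max{y_v : v ∈ V(H₂)} and μ = min{y_v : v ∈ V(H₂)}. Then M − μ ≤ dM/λ(H), and hence μ ≥ M(1 − d/√(l(n−l))). -/
open scoped Classical

/-- The adjacency spectral radius (largest adjacency eigenvalue) of a finite simple graph. -/
noncomputable def specRad {V : Type*} [Fintype V] (G : SimpleGraph V) : ℝ :=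
  sSup {μ : ℝ | Module.End.HasEigenvalue (Matrix.toLin' (G.adjMatrix ℝ)) μ}

/-!
Every vertex of `H₂` is adjacent to all of `H₁`, so the eigen-equations at two vertices of `H₂`
share the term `∑_{v ∈ H₁} y_v` and differ only by their sums over `H₂`-neighbours, each lying
between `0` and `dM`; hence `λ (M - μ) ≤ dM`. Summing the eigen-equations over each side of the
join gives `λ S₁ ≥ |H₁| S₂` and `λ S₂ ≥ |H₂| S₁` for the side sums `Sᵢ`, so `λ² ≥ l (n - l)`.
-/

open Finset Matrix

namespace SimpleGraph

section AdjMatrix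

variable {V R : Type*} [Fintype V] (G : SimpleGraph V) [DecidableRel G.Adj]
  [Semiring R] [PartialOrder R] [IsOrderedRing R]

theorem adjMatrix_mulVec_nonneg {x : V → R} (hx : 0 ≤ x) (v : V) :
    0 ≤ (G.adjMatrix R *ᵥ x) v := by
  rw [adjMatrix_mulVec_apply]
  exact sum_nonneg fun u _ => hx u

theorem adjMatrix_mulVec_le_degree_mul {x : V → R} {M : R} (hM : ∀ u, x u ≤ M) (v : V) :
    (G.adjMatrix R *ᵥ x) v ≤ G.degree v * M := by
  rw [adjMatrix_mulVec_apply, ← card_neighborFinset_eq_degree, ← nsmul_eq_mul]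
  exact sum_le_card_nsmul _ _ _ fun u _ => hM u

end AdjMatrix

theorem mul_sup'_sub_inf'_le_of_mulVec_add_const {V R : Type*} [Fintype V] [Nonempty V]
    [CommRing R] [LinearOrder R] [IsStrictOrderedRing R]
    (G : SimpleGraph V) [DecidableRel G.Adj] {d : ℕ} (hd : ∀ v, G.degree v ≤ d)
    {x : V → R} (hx : 0 ≤ x) {ρ c : R} (heig : ∀ v, ρ * x v = c + (G.adjMatrix R *ᵥ x) v) :
    ρ * (univ.sup' univ_nonempty x - univ.inf' univ_nonempty x) ≤
      d * univ.sup' univ_nonempty x := by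
  obtain ⟨w, -, hw⟩ := exists_mem_eq_sup' univ_nonempty x
  obtain ⟨u, -, hu⟩ := exists_mem_eq_inf' univ_nonempty x
  set M := univ.sup' univ_nonempty x
  have hM : ∀ v, x v ≤ M := fun v => le_sup' x (mem_univ v)
  calc ρ * (M - univ.inf' univ_nonempty x)
      = (G.adjMatrix R *ᵥ x) w - (G.adjMatrix R *ᵥ x) u := by
        rw [hw, hu, mul_sub, heig, heig]; ring
    _ ≤ G.degree w * M - 0 :=
        sub_le_sub (G.adjMatrix_mulVec_le_degree_mul hM w) (G.adjMatrix_mulVec_nonneg hx u)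
    _ ≤ d * M := by
        rw [sub_zero]
        exact mul_le_mul_of_nonneg_right (by exact_mod_cast hd w) ((hx w).trans (hM w))

section Join

variable {α β : Type*} (G : SimpleGraph α) (H : SimpleGraph β)

@[simp] theorem graphJoin_adj_inl_inl {a a' : α} :
    (graphJoin G H).Adj (Sum.inl a) (Sum.inl a') ↔ G.Adj a a' := Iff.rfl

@[simp] theorem graphJoin_adj_inr_inr {b b' : β} :
    (graphJoin G H).Adj (Sum.inr b) (Sum.inr b') ↔ H.Adj b b' := Iff.rfl

@[simp] theorem graphJoin_adj_inl_inr {a : α} {b : β} :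
    (graphJoin G H).Adj (Sum.inl a) (Sum.inr b) := trivial

@[simp] theorem graphJoin_adj_inr_inl {a : α} {b : β} :
    (graphJoin G H).Adj (Sum.inr b) (Sum.inl a) := trivial

variable [Fintype α] [Fintype β]

theorem graphJoin_adjMatrix_mulVec_inl {R : Type*} [NonAssocSemiring R] (y : α ⊕ β → R) (a : α) :
    ((graphJoin G H).adjMatrix R *ᵥ y) (Sum.inl a) =
      (G.adjMatrix R *ᵥ (y ∘ Sum.inl)) a + ∑ b, y (Sum.inr b) := by
  simp [mulVec, dotProduct, Fintype.sum_sum_type, adjMatrix_apply]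

theorem graphJoin_adjMatrix_mulVec_inr {R : Type*} [NonAssocSemiring R] (y : α ⊕ β → R) (b : β) :
    ((graphJoin G H).adjMatrix R *ᵥ y) (Sum.inr b) =
      ∑ a, y (Sum.inl a) + (H.adjMatrix R *ᵥ (y ∘ Sum.inr)) b := by
  simp [mulVec, dotProduct, Fintype.sum_sum_type, adjMatrix_apply]

variable {G H} {y : α ⊕ β → ℝ} {ρ : ℝ}

theorem sum_inr_le_mul_inl_of_graphJoin (hy : 0 ≤ y)
    (heig : (graphJoin G H).adjMatrix ℝ *ᵥ y = ρ • y) (a : α) :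
    ∑ b, y (Sum.inr b) ≤ ρ * y (Sum.inl a) := by
  have h := congrFun heig (Sum.inl a)
  rw [graphJoin_adjMatrix_mulVec_inl, Pi.smul_apply, smul_eq_mul] at h
  linarith [G.adjMatrix_mulVec_nonneg (x := y ∘ Sum.inl) (fun a => hy _) a]

theorem sum_inl_le_mul_inr_of_graphJoin (hy : 0 ≤ y)
    (heig : (graphJoin G H).adjMatrix ℝ *ᵥ y = ρ • y) (b : β) :
    ∑ a, y (Sum.inl a) ≤ ρ * y (Sum.inr b) := by
  have h := congrFun heig (Sum.inr b)
  rw [graphJoin_adjMatrix_mulVec_inr, Pi.smul_apply, smul_eq_mul] at h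
  linarith [H.adjMatrix_mulVec_nonneg (x := y ∘ Sum.inr) (fun b => hy _) b]

theorem sqrt_card_mul_card_le_of_graphJoin [Nonempty α] [Nonempty β] (hy : ∀ v, 0 < y v)
    (heig : (graphJoin G H).adjMatrix ℝ *ᵥ y = ρ • y) :
    √(Fintype.card α * Fintype.card β) ≤ ρ := by
  set S := ∑ a, y (Sum.inl a)
  set T := ∑ b, y (Sum.inr b)
  have hS : 0 < S := sum_pos (fun a _ => hy _) univ_nonempty
  have hT : 0 < T := sum_pos (fun b _ => hy _) univ_nonempty
  have hTS : Fintype.card α * T ≤ ρ * S :=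
    calc Fintype.card α * T = (univ : Finset α).card • T := by rw [card_univ, nsmul_eq_mul]
      _ ≤ ∑ a, ρ * y (Sum.inl a) := card_nsmul_le_sum _ _ _ fun a _ =>
          sum_inr_le_mul_inl_of_graphJoin (fun v => (hy v).le) heig a
      _ = ρ * S := (mul_sum ..).symm
  have hST : Fintype.card β * S ≤ ρ * T :=
    calc Fintype.card β * S = (univ : Finset β).card • S := by rw [card_univ, nsmul_eq_mul]
      _ ≤ ∑ b, ρ * y (Sum.inr b) := card_nsmul_le_sum _ _ _ fun b _ =>
          sum_inl_le_mul_inr_of_graphJoin (fun v => (hy v).le) heig b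
      _ = ρ * T := (mul_sum ..).symm
  have hρ : 0 < ρ :=
    pos_of_mul_pos_left ((by positivity : (0 : ℝ) < Fintype.card α * T).trans_le hTS) hS.le
  refine Real.sqrt_le_iff.mpr ⟨hρ.le, le_of_mul_le_mul_right ?_ (mul_pos hS hT)⟩
  calc (Fintype.card α * Fintype.card β : ℝ) * (S * T)
      = (Fintype.card α * T) * (Fintype.card β * S) := by ring
    _ ≤ (ρ * S) * (ρ * T) := mul_le_mul hTS hST (by positivity) (by positivity)
    _ = ρ ^ 2 * (S * T) := by ring

end Join

end SimpleGraph

open SimpleGraph in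
theorem perron_entry_gap_join_general {α β : Type*} [Fintype α] [Fintype β] [Nonempty β]
    (H₁ : SimpleGraph α) (H₂ : SimpleGraph β) (l n d : ℕ)
    (hα : Fintype.card α = l) (hβ : Fintype.card β = n - l) (hl : 1 ≤ l)
    (hd : ∀ v, H₂.degree v ≤ d)
    (y : α ⊕ β → ℝ)
    (heig : ((graphJoin H₁ H₂).adjMatrix ℝ).mulVec y = specRad (graphJoin H₁ H₂) • y)
    (hpos : ∀ v, 0 < y v) :
    Finset.univ.sup' Finset.univ_nonempty (fun v : β => y (Sum.inr v)) -
        Finset.univ.inf' Finset.univ_nonempty (fun v : β => y (Sum.inr v)) ≤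
      (d : ℝ) * Finset.univ.sup' Finset.univ_nonempty (fun v : β => y (Sum.inr v)) /
        specRad (graphJoin H₁ H₂) ∧
    Finset.univ.sup' Finset.univ_nonempty (fun v : β => y (Sum.inr v)) *
        (1 - (d : ℝ) / Real.sqrt ((l : ℝ) * ((n : ℝ) - l))) ≤
      Finset.univ.inf' Finset.univ_nonempty (fun v : β => y (Sum.inr v)) := by
  have : Nonempty α := Fintype.card_pos_iff.mp (hα ▸ hl)
  have hln : l ≤ n := by have := Fintype.card_pos (α := β); omega
  have hcard : (l : ℝ) * ((n : ℝ) - l) = Fintype.card α * Fintype.card β := by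
    rw [hα, hβ, Nat.cast_sub hln]
  set ρ := specRad (graphJoin H₁ H₂)
  set M := univ.sup' univ_nonempty (fun v : β => y (Sum.inr v))
  set μ := univ.inf' univ_nonempty (fun v : β => y (Sum.inr v))
  have hsqrt : √((l : ℝ) * ((n : ℝ) - l)) ≤ ρ :=
    hcard ▸ sqrt_card_mul_card_le_of_graphJoin hpos heig
  have hsqrt_pos : 0 < √((l : ℝ) * ((n : ℝ) - l)) := by
    rw [hcard]; exact Real.sqrt_pos.mpr (by simp [Fintype.card_pos])
  have hspread : ρ * (M - μ) ≤ d * M :=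
    H₂.mul_sup'_sub_inf'_le_of_mulVec_add_const hd (fun v => (hpos _).le) fun b =>
      (congrFun heig (Sum.inr b)).symm.trans (graphJoin_adjMatrix_mulVec_inr H₁ H₂ y b)
  have hgap_div : M - μ ≤ d * M / ρ := (le_div_iff₀' (hsqrt_pos.trans_le hsqrt)).mpr hspread
  refine ⟨hgap_div, ?_⟩
  have hM : 0 ≤ M := le_sup'_of_le _ (mem_univ (Classical.arbitrary β)) (hpos _).le
  calc M * (1 - d / √((l : ℝ) * ((n : ℝ) - l)))
      = M - d * M / √((l : ℝ) * ((n : ℝ) - l)) := by ring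
    _ ≤ M - d * M / ρ := by gcongr
    _ ≤ μ := by linarith

/-- Let `H = H₁ ∨ H₂` where `H₁` has `l ≥ 1` vertices and `H₂` has `n − l` vertices
(`n > l`) with maximum degree `d`, `λ(H) > 0`, and let `y` be a Perron eigenvector of
`H`.  Set `M = max{y_v : v ∈ V(H₂)}` and `μ = min{y_v : v ∈ V(H₂)}`.  Then
`M − μ ≤ d M / λ(H)`, and hence `μ ≥ M (1 − d / √(l(n−l)))`. -/
theorem perron_entry_gap_join {α β : Type*} [Fintype α] [Fintype β] [Nonempty β]
    (H₁ : SimpleGraph α) (H₂ : SimpleGraph β) (l n d : ℕ)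
    (hα : Fintype.card α = l) (hβ : Fintype.card β = n - l) (hl : 1 ≤ l) (hln : l < n)
    (hd : ∀ v, H₂.degree v ≤ d)
    (hlam : 0 < specRad (graphJoin H₁ H₂))
    (y : α ⊕ β → ℝ)
    (heig : ((graphJoin H₁ H₂).adjMatrix ℝ).mulVec y = specRad (graphJoin H₁ H₂) • y)
    (hpos : ∀ v, 0 < y v) :
    Finset.univ.sup' Finset.univ_nonempty (fun v : β => y (Sum.inr v)) -
        Finset.univ.inf' Finset.univ_nonempty (fun v : β => y (Sum.inr v)) ≤
      (d : ℝ) * Finset.univ.sup' Finset.univ_nonempty (fun v : β => y (Sum.inr v)) /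
        specRad (graphJoin H₁ H₂) ∧
    Finset.univ.sup' Finset.univ_nonempty (fun v : β => y (Sum.inr v)) *
        (1 - (d : ℝ) / Real.sqrt ((l : ℝ) * ((n : ℝ) - l))) ≤
      Finset.univ.inf' Finset.univ_nonempty (fun v : β => y (Sum.inr v)) :=
  perron_entry_gap_join_general H₁ H₂ l n d hα hβ hl hd y heig hpos
end
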